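/- arXiv:math/0607023 — 7 statements merged into one kernel-verified Lean document; each statement's English description precedes it below -/
import Mathlib

section
/- Let d be a semi-metric defined on the convex hull of a family P of probability measures such that for each fixed P' ∈ P the map P ↦ d²(P, P') is convex on conv(P). If d²(P, P*) ≤ sup_{0<α<1} -log P0(p/p*)^α holds for every P in the convex hull of P, then for every m, every λ1,...,λm ≥ 0 summing to 1, and every P, P1,...,Pm ∈ P: (1/4)∑_i λ_i d²(P_i, P*) - (3/2)∑_i λ_i d²(P_i, P) ≤ sup_{0<α<1} -log P0(∑_i λ_i p_i / p*)^α. -/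
open MeasureTheory Real

/-- If `d` is a semi-metric on the convex hull of a family `Ps` of densities,
`d²(·,P')` is convex on the convex hull, and `d²(P,P*) ≤ sup_{0<α<1} -log P0 (p/p*)^α` for
every `P` in the convex hull, then for convex combinations:
`(1/4)∑ λᵢ d²(Pᵢ,P*) - (3/2)∑ λᵢ d²(Pᵢ,P) ≤ sup_{0<α<1} -log P0 (∑ λᵢ pᵢ / p*)^α`. -/
theorem stmt1 {X : Type*} [MeasurableSpace X] (P0 : Measure X) [IsProbabilityMeasure P0]
    (Ps : Set (X → ℝ)) (pstar : X → ℝ) (hstar : pstar ∈ Ps)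
    (d : (X → ℝ) → (X → ℝ) → ℝ)
    (hd_nonneg : ∀ f g, f ∈ convexHull ℝ Ps → g ∈ convexHull ℝ Ps → 0 ≤ d f g)
    (hd_symm : ∀ f g, f ∈ convexHull ℝ Ps → g ∈ convexHull ℝ Ps → d f g = d g f)
    (hd_tri : ∀ f g h, f ∈ convexHull ℝ Ps → g ∈ convexHull ℝ Ps → h ∈ convexHull ℝ Ps →
      d f h ≤ d f g + d g h)
    (hd_convex : ∀ g ∈ Ps, ConvexOn ℝ (convexHull ℝ Ps) (fun f => (d f g) ^ 2))
    (hbound : ∀ f ∈ convexHull ℝ Ps,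
      (d f pstar) ^ 2 ≤ ⨆ α ∈ Set.Ioo (0 : ℝ) 1,
        -Real.log (∫ x, (f x / pstar x) ^ α ∂P0)) :
    ∀ (m : ℕ) (lam : Fin m → ℝ) (P : X → ℝ) (Pi : Fin m → (X → ℝ)),
      (∀ i, 0 ≤ lam i) → (∑ i, lam i = 1) → P ∈ Ps → (∀ i, Pi i ∈ Ps) →
      (1 / 4) * (∑ i, lam i * (d (Pi i) pstar) ^ 2) -
        (3 / 2) * (∑ i, lam i * (d (Pi i) P) ^ 2) ≤
      ⨆ α ∈ Set.Ioo (0 : ℝ) 1,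
        -Real.log (∫ x, ((∑ i, lam i * Pi i x) / pstar x) ^ α ∂P0) := by
  intro m lam P Pi hl hl1 hP hPi
  set Q : X → ℝ := ∑ i, lam i • Pi i with hQdef
  have hQeq : ∀ x, (∑ i, lam i * Pi i x) = Q x := by
    intro x
    simp [hQdef, Finset.sum_apply]
  have hmemPs : ∀ f ∈ Ps, f ∈ convexHull ℝ Ps := fun f hf => subset_convexHull ℝ Ps hf
  have hQmem : Q ∈ convexHull ℝ Ps := by
    apply (convex_convexHull ℝ Ps).sum_mem (fun i _ => hl i) hl1
    exact fun i _ => hmemPs _ (hPi i)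
  have hPm : P ∈ convexHull ℝ Ps := hmemPs P hP
  have hsm : pstar ∈ convexHull ℝ Ps := hmemPs _ hstar
  have hPim : ∀ i, Pi i ∈ convexHull ℝ Ps := fun i => hmemPs _ (hPi i)
  set A := ∑ i, lam i * (d (Pi i) pstar) ^ 2 with hA
  set B := ∑ i, lam i * (d (Pi i) P) ^ 2 with hB
  -- Jensen: d(Q,P)^2 ≤ B
  have hJ : (d Q P) ^ 2 ≤ B := by
    have := (hd_convex P hP).map_sum_le (fun i _ => hl i) hl1 (fun i _ => hPim i)
    simpa [smul_eq_mul, hB] using this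
  -- A ≤ 2B + 2 d(P,pstar)^2
  have hAubd : A ≤ 2 * B + 2 * (d P pstar) ^ 2 := by
    have step : ∀ i, lam i * (d (Pi i) pstar) ^ 2 ≤
        2 * (lam i * (d (Pi i) P) ^ 2) + lam i * (2 * (d P pstar) ^ 2) := by
      intro i
      have ht := hd_tri (Pi i) P pstar (hPim i) hPm hsm
      have h1 : (d (Pi i) pstar) ^ 2 ≤ (d (Pi i) P + d P pstar) ^ 2 :=
        pow_le_pow_left₀ (hd_nonneg (Pi i) pstar (hPim i) hsm) ht 2
      nlinarith [hl i, sq_nonneg (d (Pi i) P - d P pstar),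
        mul_le_mul_of_nonneg_left h1 (hl i)]
    calc A ≤ ∑ i, (2 * (lam i * (d (Pi i) P) ^ 2) + lam i * (2 * (d P pstar) ^ 2)) :=
          Finset.sum_le_sum (fun i _ => step i)
      _ = 2 * B + (∑ i, lam i) * (2 * (d P pstar) ^ 2) := by
          rw [Finset.sum_add_distrib, ← Finset.mul_sum, ← Finset.sum_mul]
      _ = 2 * B + 2 * (d P pstar) ^ 2 := by rw [hl1]; ring
  have htri2 : d P pstar ≤ d Q P + d Q pstar := by
    have := hd_tri P Q pstar hPm hQmem hsm
    rwa [hd_symm P Q hPm hQmem] at this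
  have hkey : (1 / 4) * A - (3 / 2) * B ≤ (d Q pstar) ^ 2 := by
    have h2 : (d P pstar) ^ 2 ≤ (d Q P + d Q pstar) ^ 2 :=
      pow_le_pow_left₀ (hd_nonneg P pstar hPm hsm) htri2 2
    nlinarith [hJ, hAubd, h2, sq_nonneg (d Q P - d Q pstar)]
  refine hkey.trans ?_
  simp only [hQeq]
  exact hbound Q hQmem
end

section
/- Let f(λ) = -P0 log(1 + λ((p/p*) - 1)) for λ ∈ [0,1], where p, p* are probability densities and P0 a probability measure with P0(p* > 0) = 1. Then the right derivative of f at 0 exists and equals f'(0+) = 1 - P0(p/p*). -/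
/-!
The difference quotient `log (1 + t y) / t` tends to `y` as `t → 0⁺`, and for `y ≥ -1` and
`t ∈ (0, 1/2]` concavity of `log` squeezes it between `2 log (1 + y/2)` and `y`. With
`y = p/p* - 1`, both bounds are integrable, so dominated convergence lets the derivative pass
under the integral.
-/

open MeasureTheory Real Filter Topology Set

lemma mul_log_one_add_le_log_one_add_mul {y s : ℝ} (hy : 0 < 1 + y) (hs₀ : 0 ≤ s)
    (hs₁ : s ≤ 1) : s * log (1 + y) ≤ log (1 + s * y) := by
  have h := strictConcaveOn_log_Ioi.concaveOn.2 (mem_Ioi.2 hy) (mem_Ioi.2 one_pos) hs₀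
    (sub_nonneg.2 hs₁) (by ring)
  simp only [smul_eq_mul, log_one, mul_zero, add_zero] at h
  rwa [show s * (1 + y) + (1 - s) * 1 = 1 + s * y by ring] at h

lemma abs_log_one_add_mul_div_le {y t : ℝ} (hy : -1 ≤ y) (ht₀ : 0 < t) (ht₁ : t ≤ 1 / 2) :
    |log (1 + t * y) / t| ≤ |y| + 2 * |log (1 + 1 / 2 * y)| := by
  have hpos : 0 < 1 + t * y := by nlinarith
  have upper : log (1 + t * y) / t ≤ y := by
    rw [div_le_iff₀ ht₀]
    linarith [log_le_sub_one_of_pos hpos]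
  have lower : 2 * log (1 + 1 / 2 * y) ≤ log (1 + t * y) / t := by
    rw [le_div_iff₀ ht₀]
    have h := mul_log_one_add_le_log_one_add_mul (y := 1 / 2 * y) (s := 2 * t)
      (by linarith) (by linarith) (by linarith)
    rw [show 2 * t * (1 / 2 * y) = t * y by ring] at h
    linarith
  rw [abs_le]
  constructor
  · linarith [abs_nonneg y, neg_abs_le (log (1 + 1 / 2 * y))]
  · linarith [le_abs_self y, abs_nonneg (log (1 + 1 / 2 * y))]

lemma tendsto_log_one_add_mul_div (y : ℝ) :
    Tendsto (fun t => log (1 + t * y) / t) (𝓝[≠] 0) (𝓝 y) := by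
  have h : HasDerivAt (fun t => log (1 + t * y)) y 0 := by
    simpa using (((hasDerivAt_id (0 : ℝ)).mul_const y).const_add 1).log (by simp)
  simpa [div_eq_inv_mul] using hasDerivAt_iff_tendsto_slope_zero.1 h

theorem hasDerivWithinAt_integral_log_one_add_mul {X : Type*} [MeasurableSpace X]
    {μ : Measure X} {g : X → ℝ} (hg : ∀ᵐ x ∂μ, -1 ≤ g x) (hgi : Integrable g μ)
    (hlog : Integrable (fun x => log (1 + 1 / 2 * g x)) μ) :
    HasDerivWithinAt (fun t => ∫ x, log (1 + t * g x) ∂μ) (∫ x, g x ∂μ) (Ici 0) 0 := by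
  rw [← hasDerivWithinAt_Ioi_iff_Ici, hasDerivWithinAt_iff_tendsto_slope' self_notMem_Ioi]
  have hslope : slope (fun t => ∫ x, log (1 + t * g x) ∂μ) 0
      = fun t => ∫ x, log (1 + t * g x) / t ∂μ := by
    ext t
    simp [slope_def_field, integral_div]
  rw [hslope]
  refine tendsto_integral_filter_of_dominated_convergence
    (fun x => |g x| + 2 * |log (1 + 1 / 2 * g x)|) ?_ ?_ (hgi.abs.add (hlog.abs.const_mul 2)) ?_
  · refine Eventually.of_forall fun t => ?_
    exact ((hgi.aemeasurable.const_mul t).const_add 1).log.div_const t |>.aestronglyMeasurable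
  · filter_upwards [Ioo_mem_nhdsGT (by norm_num : (0 : ℝ) < 1 / 2)] with t ht
    filter_upwards [hg] with x hx
    exact abs_log_one_add_mul_div_le hx ht.1 ht.2.le
  · exact Eventually.of_forall fun x =>
      (tendsto_log_one_add_mul_div (g x)).mono_left (nhdsWithin_mono _ fun t ht => ne_of_gt ht)

theorem stmt4_general {X : Type*} [MeasurableSpace X] (P0 : Measure X) [IsProbabilityMeasure P0]
    (p pstar : X → ℝ)
    (hp : ∀ x, 0 ≤ p x) (hps : ∀ x, 0 ≤ pstar x)
    (hratio : Integrable (fun x => p x / pstar x) P0)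
    (hfinite : ∀ lam ∈ Set.Icc (0 : ℝ) 1,
      Integrable (fun x => Real.log (1 + lam * (p x / pstar x - 1))) P0) :
    HasDerivWithinAt
      (fun lam : ℝ => -∫ x, Real.log (1 + lam * (p x / pstar x - 1)) ∂P0)
      (1 - ∫ x, p x / pstar x ∂P0) (Set.Ici 0) 0 := by
  have hge : ∀ᵐ x ∂P0, -1 ≤ p x / pstar x - 1 :=
    Eventually.of_forall fun x => by linarith [div_nonneg (hp x) (hps x)]
  have h := (hasDerivWithinAt_integral_log_one_add_mul hge
    (hratio.sub (integrable_const 1)) (hfinite (1 / 2) (by norm_num))).neg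
  rwa [integral_sub hratio (integrable_const 1), integral_const, probReal_univ, one_smul,
    neg_sub] at h

/-- For `f(λ) = -P0 log(1 + λ((p/p*) - 1))` on `[0,1]`, with `p, p*` probability
densities and `p* > 0` `P0`-a.s., the right derivative of `f` at `0` exists and equals
`1 - P0(p/p*)`. -/
theorem stmt4 {X : Type*} [MeasurableSpace X] (P0 : Measure X) [IsProbabilityMeasure P0]
    {μ : Measure X} [SigmaFinite μ]
    (p pstar : X → ℝ) (hpm : Measurable p) (hpsm : Measurable pstar)
    (hp : ∀ x, 0 ≤ p x) (hps : ∀ x, 0 ≤ pstar x)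
    (hp1 : ∫ x, p x ∂μ = 1) (hps1 : ∫ x, pstar x ∂μ = 1)
    (hpos : ∀ᵐ x ∂P0, 0 < pstar x)
    (hratio : Integrable (fun x => p x / pstar x) P0)
    (hfinite : ∀ lam ∈ Set.Icc (0 : ℝ) 1,
      Integrable (fun x => Real.log (1 + lam * (p x / pstar x - 1))) P0) :
    HasDerivWithinAt
      (fun lam : ℝ => -∫ x, Real.log (1 + lam * (p x / pstar x - 1)) ∂P0)
      (1 - ∫ x, p x / pstar x ∂P0) (Set.Ici 0) 0 :=
  stmt4_general P0 p pstar hp hps hratio hfinite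
end

section
/- Let P be a probability measure and Q a finite measure on a measurable space, with densities p and q relative to a σ-finite measure μ. Then for every α ∈ (0,1), P(p < q) + Q(p ≥ q) ≤ ρ_α(P,Q), where ρ_α(P,Q) = ∫ p^α q^{1-α} dμ. -/
open MeasureTheory Real

/-- For a probability measure `P` with density `p` and a finite measure `Q`
with density `q` relative to a σ-finite `μ`, for every `α ∈ (0,1)`:
`P(p < q) + Q(p ≥ q) ≤ ρ_α(P,Q) = ∫ p^α q^{1-α} dμ`. -/
theorem stmt10 {X : Type*} [MeasurableSpace X] (μ : Measure X) [SigmaFinite μ]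
    (p q : X → ℝ) (hpm : Measurable p) (hqm : Measurable q)
    (hp : ∀ x, 0 ≤ p x) (hq : ∀ x, 0 ≤ q x)
    (hpi : Integrable p μ) (hqi : Integrable q μ)
    (hp1 : ∫ x, p x ∂μ = 1)
    (α : ℝ) (hα : α ∈ Set.Ioo (0 : ℝ) 1)
    (hρ : Integrable (fun x => p x ^ α * q x ^ (1 - α)) μ) :
    (∫ x in {x | p x < q x}, p x ∂μ) + (∫ x in {x | q x ≤ p x}, q x ∂μ) ≤
      ∫ x, p x ^ α * q x ^ (1 - α) ∂μ := by
  obtain ⟨hα0, hα1⟩ := hα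
  set f : X → ℝ := fun x => p x ^ α * q x ^ (1 - α) with hf
  have hA : MeasurableSet {x | p x < q x} := measurableSet_lt hpm hqm
  have hcompl : {x | q x ≤ p x} = {x | p x < q x}ᶜ := by
    ext x; simp [not_lt]
  have h1 : (∫ x in {x | p x < q x}, p x ∂μ) ≤ ∫ x in {x | p x < q x}, f x ∂μ := by
    refine setIntegral_mono_on hpi.integrableOn hρ.integrableOn hA ?_
    intro x hx
    have hx' : p x < q x := hx
    calc p x = p x ^ α * p x ^ (1 - α) := by
          rw [← Real.rpow_add' (hp x) (by norm_num)]
          simp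
      _ ≤ p x ^ α * q x ^ (1 - α) := by
          apply mul_le_mul_of_nonneg_left _ (Real.rpow_nonneg (hp x) α)
          exact Real.rpow_le_rpow (hp x) hx'.le (by linarith)
  have h2 : (∫ x in {x | q x ≤ p x}, q x ∂μ) ≤ ∫ x in {x | q x ≤ p x}, f x ∂μ := by
    refine setIntegral_mono_on hqi.integrableOn hρ.integrableOn
      (measurableSet_le hqm hpm) ?_
    intro x hx
    have hx' : q x ≤ p x := hx
    calc q x = q x ^ α * q x ^ (1 - α) := by
          rw [← Real.rpow_add' (hq x) (by norm_num)]
          simp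
      _ ≤ p x ^ α * q x ^ (1 - α) := by
          apply mul_le_mul_of_nonneg_right _ (Real.rpow_nonneg (hq x) _)
          exact Real.rpow_le_rpow (hq x) hx' hα0.le
  have hsum : (∫ x in {x | p x < q x}, f x ∂μ) + (∫ x in {x | q x ≤ p x}, f x ∂μ)
      = ∫ x, f x ∂μ := by
    rw [hcompl]
    exact integral_add_compl hA hρ
  linarith
end

section
/- The Hellinger transform is multiplicative under products and sub-multiplicative over convex hulls: for classes P1, P2, Q1, Q2 of finite measures and 0 < α < 1, ρ_α(P1 × P2, Q1 × Q2) ≤ ρ_α(P1, Q1) · ρ_α(P2, Q2), where ρ_α(P, Q) = sup{∫ p^α q^{1-α} dμ : P ∈ conv(P), Q ∈ conv(Q)} and P1 × P2 denotes the class of product measures {P1 × P2 : Pi ∈ Pi}. -/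
open MeasureTheory Real

/-- The Hellinger transform over convex hulls of classes of densities relative to `μ`:
`ρ_α(Ps, Qs) = sup {∫ p^α q^{1-α} dμ : p ∈ conv(Ps), q ∈ conv(Qs)}`. -/
noncomputable def rhoHull {X : Type*} [MeasurableSpace X] (μ : Measure X) (α : ℝ)
    (Ps Qs : Set (X → ℝ)) : ℝ :=
  sSup {r | ∃ p ∈ convexHull ℝ Ps, ∃ q ∈ convexHull ℝ Qs,
    r = ∫ x, p x ^ α * q x ^ (1 - α) ∂μ}

/-!
A mixture `p = ∑ᵢ wᵢ • (p₁ᵢ ⊗ p₂ᵢ)` of product densities has sections `p(x, ·) = a(x) • p̃ₓ`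
with `a = ∑ᵢ wᵢ • p₁ᵢ ∈ conv P₁` and `p̃ₓ ∈ conv P₂`, and likewise `q(x, ·) = b(x) • q̃ₓ`.
Since `∫ p^α q^{1-α}` is homogeneous of degree `α` in `p` and `1 - α` in `q`, the inner Fubini
integral is `a(x)^α b(x)^{1-α} ∫ p̃ₓ^α q̃ₓ^{1-α} ≤ a(x)^α b(x)^{1-α} ρ_α(P₂, Q₂)`, and integrating
in `x` leaves `∫ a^α b^{1-α} ≤ ρ_α(P₁, Q₁)`.

`Real.sSup` of a set that is not bounded above is `0`. If one factor is unbounded while the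
product is bounded, the other factor's set lies in `(-∞, 0]`, since it is multiplied by
arbitrarily large values; the bound is then used with the upper bound `0`, swapping the two
factors if necessary.
-/

section

variable {X Y : Type*}

lemma LinearMap.image2_convexHull_subset {E F G : Type*} [AddCommGroup E] [Module ℝ E]
    [AddCommGroup F] [Module ℝ F] [AddCommGroup G] [Module ℝ G] (B : E →ₗ[ℝ] F →ₗ[ℝ] G)
    (s : Set E) (t : Set F) :
    Set.image2 (fun x y => B x y) (convexHull ℝ s) (convexHull ℝ t) ⊆
      convexHull ℝ (Set.image2 (fun x y => B x y) s t) := by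
  rintro _ ⟨x, hx, y, hy, rfl⟩
  have hleft : ∀ y' ∈ t, B x y' ∈ convexHull ℝ (Set.image2 (fun x y => B x y) s t) := by
    intro y' hy'
    have hsub : B.flip y' '' s ⊆ Set.image2 (fun x y => B x y) s t :=
      Set.image_subset_iff.2 fun x' hx' => Set.mem_image2_of_mem hx' hy'
    have : B.flip y' '' convexHull ℝ s ⊆ _ :=
      ((B.flip y').image_convexHull s).trans_subset (convexHull_mono hsub)
    exact this ⟨x, hx, rfl⟩
  have : B x '' convexHull ℝ t ⊆ _ := ((B x).image_convexHull t).trans_subset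
    (convexHull_min (Set.image_subset_iff.2 hleft) (convex_convexHull ℝ _))
  exact this ⟨y, hy, rfl⟩

lemma Finset.exists_mem_convexHull_sum_smul_eq {E ι : Type*} [AddCommGroup E]
    [Module ℝ E] {s : Set E} {t : Finset ι} (ht : t.Nonempty) {c : ι → ℝ}
    (hc : ∀ i ∈ t, 0 ≤ c i) {z : ι → E} (hz : ∀ i ∈ t, z i ∈ s) :
    ∃ p ∈ convexHull ℝ s, ∑ i ∈ t, c i • z i = (∑ i ∈ t, c i) • p := by
  rcases (Finset.sum_nonneg hc).eq_or_lt with hC | hC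
  · obtain ⟨i₀, hi₀⟩ := ht
    refine ⟨z i₀, subset_convexHull ℝ s (hz i₀ hi₀), ?_⟩
    rw [← hC, zero_smul]
    exact Finset.sum_eq_zero fun i hi => by
      rw [(Finset.sum_eq_zero_iff_of_nonneg hc).1 hC.symm i hi, zero_smul]
  · refine ⟨t.centerMass c z, t.centerMass_mem_convexHull hc hC hz, ?_⟩
    rw [Finset.centerMass, smul_smul, mul_inv_cancel₀ hC.ne', one_smul]

def prodClass (P₁ : Set (X → ℝ)) (P₂ : Set (Y → ℝ)) : Set (X × Y → ℝ) :=
  {f | ∃ p₁ ∈ P₁, ∃ p₂ ∈ P₂, f = fun z => p₁ z.1 * p₂ z.2}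

section ConvexHullProd

variable {P₁ : Set (X → ℝ)} {P₂ : Set (Y → ℝ)}

def prodMulₗ : (X → ℝ) →ₗ[ℝ] (Y → ℝ) →ₗ[ℝ] (X × Y → ℝ) :=
  LinearMap.mk₂ ℝ (fun f g z => f z.1 * g z.2)
    (fun _ _ _ => funext fun _ => add_mul _ _ _) (fun _ _ _ => funext fun _ => mul_assoc _ _ _)
    (fun _ _ _ => funext fun _ => mul_add _ _ _) (fun _ _ _ => funext fun _ => mul_left_comm _ _ _)

lemma prodClass_eq_image2 :
    prodClass P₁ P₂ = Set.image2 (fun f g => prodMulₗ f g) P₁ P₂ := by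
  ext f
  simp only [prodClass, Set.mem_ofPred_eq, Set.mem_image2, eq_comm]
  rfl

lemma mul_mem_convexHull_prodClass {p₁ : X → ℝ} {p₂ : Y → ℝ} (h₁ : p₁ ∈ convexHull ℝ P₁)
    (h₂ : p₂ ∈ convexHull ℝ P₂) :
    (fun z : X × Y => p₁ z.1 * p₂ z.2) ∈ convexHull ℝ (prodClass P₁ P₂) := by
  rw [prodClass_eq_image2]
  exact prodMulₗ.image2_convexHull_subset P₁ P₂ (Set.mem_image2_of_mem h₁ h₂)

lemma comp_swap_mem_convexHull_prodClass {p : X × Y → ℝ}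
    (hp : p ∈ convexHull ℝ (prodClass P₁ P₂)) :
    p ∘ Prod.swap ∈ convexHull ℝ (prodClass P₂ P₁) := by
  have hsub : LinearMap.funLeft ℝ ℝ Prod.swap '' prodClass P₁ P₂ ⊆ prodClass P₂ P₁ := by
    rintro _ ⟨_, ⟨p₁, hp₁, p₂, hp₂, rfl⟩, rfl⟩
    exact ⟨p₂, hp₂, p₁, hp₁, funext fun _ => mul_comm _ _⟩
  exact convexHull_mono hsub
    ((LinearMap.funLeft ℝ ℝ Prod.swap).image_convexHull _ ▸ ⟨p, hp, rfl⟩)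

end ConvexHullProd

lemma exists_section_eq_smul_of_mem_convexHull_prodClass {P₁ : Set (X → ℝ)} {P₂ : Set (Y → ℝ)}
    (hP₁ : ∀ p ∈ P₁, 0 ≤ p) {p : X × Y → ℝ} (hp : p ∈ convexHull ℝ (prodClass P₁ P₂)) :
    ∃ a ∈ convexHull ℝ P₁, ∀ x, ∃ p' ∈ convexHull ℝ P₂, (fun y => p (x, y)) = a x • p' := by
  obtain ⟨ι, _, w, z, hw₀, hw₁, hz, rfl⟩ := mem_convexHull_iff_exists_fintype.1 hp
  choose f₁ hf₁ f₂ hf₂ hzf using hz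
  refine ⟨∑ i, w i • f₁ i, (convex_convexHull ℝ P₁).sum_mem (fun i _ => hw₀ i) hw₁
    fun i _ => subset_convexHull ℝ P₁ (hf₁ i), fun x => ?_⟩
  obtain ⟨p', hp', hsum⟩ := Finset.exists_mem_convexHull_sum_smul_eq
    (Finset.nonempty_of_sum_ne_zero (hw₁.trans_ne one_ne_zero)) (c := fun i => w i * f₁ i x)
    (fun i _ => mul_nonneg (hw₀ i) (hP₁ _ (hf₁ i) x)) (fun i _ => hf₂ i)
  refine ⟨p', hp', ?_⟩
  convert hsum using 1
  · ext y
    simp [Finset.sum_apply, hzf, mul_assoc]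
  · simp [Finset.sum_apply]

def IsDensity [MeasurableSpace X] (μ : Measure X) (p : X → ℝ) : Prop :=
  Measurable p ∧ (∀ x, 0 ≤ p x) ∧ Integrable p μ

section IsDensity

variable [MeasurableSpace X] [MeasurableSpace Y] {μ : Measure X} {p q : X → ℝ}

lemma IsDensity.nonneg (hp : IsDensity μ p) (x : X) : 0 ≤ p x := hp.2.1 x

lemma IsDensity.smul_add_smul (hp : IsDensity μ p) (hq : IsDensity μ q) {a b : ℝ}
    (ha : 0 ≤ a) (hb : 0 ≤ b) : IsDensity μ (a • p + b • q) :=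
  ⟨(hp.1.const_mul a).add (hq.1.const_mul b),
    fun x => add_nonneg (mul_nonneg ha (hp.nonneg x)) (mul_nonneg hb (hq.nonneg x)),
    (hp.2.2.smul a).add (hq.2.2.smul b)⟩

lemma convex_setOf_isDensity (μ : Measure X) : Convex ℝ {p : X → ℝ | IsDensity μ p} :=
  fun _ hp _ hq _ _ ha hb _ => hp.smul_add_smul hq ha hb

lemma IsDensity.of_mem_convexHull {s : Set (X → ℝ)} (hs : ∀ p ∈ s, IsDensity μ p)
    (hp : p ∈ convexHull ℝ s) : IsDensity μ p :=
  convexHull_min hs (convex_setOf_isDensity μ) hp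

lemma IsDensity.prod {ν : Measure Y} [SFinite ν] {p₁ : X → ℝ} {p₂ : Y → ℝ}
    (h₁ : IsDensity μ p₁) (h₂ : IsDensity ν p₂) :
    IsDensity (μ.prod ν) fun z => p₁ z.1 * p₂ z.2 :=
  ⟨(h₁.1.comp measurable_fst).mul (h₂.1.comp measurable_snd),
    fun _ => mul_nonneg (h₁.nonneg _) (h₂.nonneg _), h₁.2.2.mul_prod h₂.2.2⟩

lemma IsDensity.of_mem_prodClass {μ₂ : Measure Y} [SFinite μ₂]
    {P₁ : Set (X → ℝ)} {P₂ : Set (Y → ℝ)}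
    (hP₁ : ∀ p ∈ P₁, IsDensity μ p) (hP₂ : ∀ p ∈ P₂, IsDensity μ₂ p) :
    ∀ p ∈ prodClass P₁ P₂, IsDensity (μ.prod μ₂) p := by
  rintro _ ⟨p₁, hp₁, p₂, hp₂, rfl⟩
  exact (hP₁ p₁ hp₁).prod (hP₂ p₂ hp₂)

lemma IsDensity.integrable_rpow_mul_rpow (hp : IsDensity μ p) (hq : IsDensity μ q) {α : ℝ}
    (hα₀ : 0 ≤ α) (hα₁ : α ≤ 1) : Integrable (fun x => p x ^ α * q x ^ (1 - α)) μ := by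
  have h1α : 0 ≤ 1 - α := sub_nonneg.2 hα₁
  refine Integrable.mono' ((hp.2.2.const_mul α).add (hq.2.2.const_mul (1 - α)))
    (((hp.1.pow_const α).mul (hq.1.pow_const (1 - α))).aestronglyMeasurable)
    (Filter.Eventually.of_forall fun x => ?_)
  rw [norm_of_nonneg (by have := hp.nonneg x; have := hq.nonneg x; positivity)]
  exact geom_mean_le_arith_mean2_weighted hα₀ h1α (hp.nonneg x) (hq.nonneg x) (by ring)

end IsDensity

def hellingerSet [MeasurableSpace X] (μ : Measure X) (α : ℝ) (Ps Qs : Set (X → ℝ)) : Set ℝ :=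
  {r | ∃ p ∈ convexHull ℝ Ps, ∃ q ∈ convexHull ℝ Qs, r = ∫ x, p x ^ α * q x ^ (1 - α) ∂μ}

section Hellinger

variable [MeasurableSpace X] [MeasurableSpace Y] {α : ℝ}

lemma hellingerSet_nonneg {μ : Measure X} {Ps Qs : Set (X → ℝ)}
    (hPs : ∀ p ∈ Ps, IsDensity μ p) (hQs : ∀ q ∈ Qs, IsDensity μ q) :
    ∀ r ∈ hellingerSet μ α Ps Qs, 0 ≤ r := by
  rintro _ ⟨p, hp, q, hq, rfl⟩
  have hp' := IsDensity.of_mem_convexHull hPs hp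
  have hq' := IsDensity.of_mem_convexHull hQs hq
  exact integral_nonneg fun x => by have := hp'.nonneg x; have := hq'.nonneg x; positivity

lemma integral_smul_rpow_mul_smul_rpow (μ : Measure X) {p q : X → ℝ} (hp : 0 ≤ p) (hq : 0 ≤ q)
    {t s : ℝ} (ht : 0 ≤ t) (hs : 0 ≤ s) :
    ∫ x, (t • p) x ^ α * (s • q) x ^ (1 - α) ∂μ =
      t ^ α * s ^ (1 - α) * ∫ x, p x ^ α * q x ^ (1 - α) ∂μ := by
  rw [← integral_const_mul]
  congr 1 with x
  simp only [Pi.smul_apply, smul_eq_mul]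
  rw [mul_rpow ht (hp x), mul_rpow hs (hq x)]
  ring

lemma mul_mem_hellingerSet_prod (μ₁ : Measure X) (μ₂ : Measure Y) [SFinite μ₁] [SFinite μ₂]
    {P₁ Q₁ : Set (X → ℝ)} {P₂ Q₂ : Set (Y → ℝ)}
    (hP₁ : ∀ p ∈ P₁, IsDensity μ₁ p) (hQ₁ : ∀ q ∈ Q₁, IsDensity μ₁ q)
    (hP₂ : ∀ p ∈ P₂, IsDensity μ₂ p) (hQ₂ : ∀ q ∈ Q₂, IsDensity μ₂ q)
    {s₁ s₂ : ℝ} (hs₁ : s₁ ∈ hellingerSet μ₁ α P₁ Q₁) (hs₂ : s₂ ∈ hellingerSet μ₂ α P₂ Q₂) :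
    s₁ * s₂ ∈ hellingerSet (μ₁.prod μ₂) α (prodClass P₁ P₂) (prodClass Q₁ Q₂) := by
  obtain ⟨p₁, hp₁, q₁, hq₁, rfl⟩ := hs₁
  obtain ⟨p₂, hp₂, q₂, hq₂, rfl⟩ := hs₂
  refine ⟨_, mul_mem_convexHull_prodClass hp₁ hp₂, _, mul_mem_convexHull_prodClass hq₁ hq₂, ?_⟩
  rw [← integral_prod_mul]
  congr 1 with z
  rw [mul_rpow ((IsDensity.of_mem_convexHull hP₁ hp₁).nonneg _)
      ((IsDensity.of_mem_convexHull hP₂ hp₂).nonneg _),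
    mul_rpow ((IsDensity.of_mem_convexHull hQ₁ hq₁).nonneg _)
      ((IsDensity.of_mem_convexHull hQ₂ hq₂).nonneg _)]
  ring

lemma hellingerSet_prod_subset_swap (μ₁ : Measure X) (μ₂ : Measure Y) [SFinite μ₁] [SFinite μ₂]
    (P₁ Q₁ : Set (X → ℝ)) (P₂ Q₂ : Set (Y → ℝ)) :
    hellingerSet (μ₁.prod μ₂) α (prodClass P₁ P₂) (prodClass Q₁ Q₂) ⊆
      hellingerSet (μ₂.prod μ₁) α (prodClass P₂ P₁) (prodClass Q₂ Q₁) := by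
  rintro _ ⟨p, hp, q, hq, rfl⟩
  exact ⟨_, comp_swap_mem_convexHull_prodClass hp, _, comp_swap_mem_convexHull_prodClass hq,
    (integral_prod_swap fun z => p z ^ α * q z ^ (1 - α)).symm⟩

lemma exists_mem_hellingerSet_le_mul_of_mem_upperBounds (μ₁ : Measure X) (μ₂ : Measure Y)
    [SFinite μ₁] [SFinite μ₂] {P₁ Q₁ : Set (X → ℝ)} {P₂ Q₂ : Set (Y → ℝ)}
    (hP₁ : ∀ p ∈ P₁, IsDensity μ₁ p) (hQ₁ : ∀ q ∈ Q₁, IsDensity μ₁ q)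
    (hP₂ : ∀ p ∈ P₂, IsDensity μ₂ p) (hQ₂ : ∀ q ∈ Q₂, IsDensity μ₂ q) (hα : α ∈ Set.Icc 0 1)
    {r : ℝ} (hr : r ∈ hellingerSet (μ₁.prod μ₂) α (prodClass P₁ P₂) (prodClass Q₁ Q₂)) :
    ∃ s ∈ hellingerSet μ₁ α P₁ Q₁, ∀ M ∈ upperBounds (hellingerSet μ₂ α P₂ Q₂), r ≤ s * M := by
  obtain ⟨p, hp, q, hq, rfl⟩ := hr
  obtain ⟨a, ha, hpa⟩ := exists_section_eq_smul_of_mem_convexHull_prodClass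
    (fun f hf => (hP₁ f hf).nonneg) hp
  obtain ⟨b, hb, hqb⟩ := exists_section_eq_smul_of_mem_convexHull_prodClass
    (fun f hf => (hQ₁ f hf).nonneg) hq
  have had := IsDensity.of_mem_convexHull hP₁ ha
  have hbd := IsDensity.of_mem_convexHull hQ₁ hb
  have hint := (IsDensity.of_mem_convexHull (IsDensity.of_mem_prodClass hP₁ hP₂) hp)
    |>.integrable_rpow_mul_rpow
      (IsDensity.of_mem_convexHull (IsDensity.of_mem_prodClass hQ₁ hQ₂) hq) hα.1 hα.2
  refine ⟨_, ⟨a, ha, b, hb, rfl⟩, fun M hM => ?_⟩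
  have hsection : ∀ x, ∫ y, p (x, y) ^ α * q (x, y) ^ (1 - α) ∂μ₂ ≤
      a x ^ α * b x ^ (1 - α) * M := by
    intro x
    obtain ⟨p', hp', hpx⟩ := hpa x
    obtain ⟨q', hq', hqx⟩ := hqb x
    calc ∫ y, p (x, y) ^ α * q (x, y) ^ (1 - α) ∂μ₂
        = ∫ y, (a x • p') y ^ α * (b x • q') y ^ (1 - α) ∂μ₂ := by rw [← hpx, ← hqx]
      _ = a x ^ α * b x ^ (1 - α) * ∫ y, p' y ^ α * q' y ^ (1 - α) ∂μ₂ :=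
        integral_smul_rpow_mul_smul_rpow μ₂ (IsDensity.of_mem_convexHull hP₂ hp').nonneg
          (IsDensity.of_mem_convexHull hQ₂ hq').nonneg (had.nonneg x) (hbd.nonneg x)
      _ ≤ a x ^ α * b x ^ (1 - α) * M := by
        have := had.nonneg x
        have := hbd.nonneg x
        exact mul_le_mul_of_nonneg_left (hM ⟨p', hp', q', hq', rfl⟩) (by positivity)
  calc ∫ z, p z ^ α * q z ^ (1 - α) ∂μ₁.prod μ₂
      = ∫ x, ∫ y, p (x, y) ^ α * q (x, y) ^ (1 - α) ∂μ₂ ∂μ₁ := integral_prod _ hint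
    _ ≤ ∫ x, a x ^ α * b x ^ (1 - α) * M ∂μ₁ := integral_mono hint.integral_prod_left
        ((had.integrable_rpow_mul_rpow hbd hα.1 hα.2).mul_const M) hsection
    _ = (∫ x, a x ^ α * b x ^ (1 - α) ∂μ₁) * M := integral_mul_const _ _

end Hellinger

end

lemma zero_mem_upperBounds_of_mul_mem_of_not_bddAbove {K : Type*} [Field K] [LinearOrder K]
    [IsStrictOrderedRing K] {A B C : Set K} (hC : BddAbove C)
    (hmul : ∀ a ∈ A, ∀ b ∈ B, a * b ∈ C) (hA : ¬BddAbove A) : 0 ∈ upperBounds B := by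
  intro b hb
  by_contra! hb₀
  obtain ⟨M, hM⟩ := hC
  obtain ⟨a, ha, hMa⟩ := not_bddAbove_iff.1 hA (M / b)
  have := hM (hmul a ha b hb)
  have := (div_lt_iff₀ hb₀).1 hMa
  linarith

lemma Real.sSup_le_sSup_mul_sSup {S S₁ S₂ : Set ℝ} (h₁ : ∀ s ∈ S₁, 0 ≤ s)
    (h₂ : ∀ s ∈ S₂, 0 ≤ s) (hmul : ∀ a ∈ S₁, ∀ b ∈ S₂, a * b ∈ S)
    (hle₁ : ∀ r ∈ S, ∃ s ∈ S₁, ∀ M ∈ upperBounds S₂, r ≤ s * M)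
    (hle₂ : ∀ r ∈ S, ∃ s ∈ S₂, ∀ M ∈ upperBounds S₁, r ≤ s * M) :
    sSup S ≤ sSup S₁ * sSup S₂ := by
  have hρ₂ := Real.sSup_nonneg h₂
  have hρ := mul_nonneg (Real.sSup_nonneg h₁) hρ₂
  by_cases hS : BddAbove S
  swap
  · rw [Real.sSup_of_not_bddAbove hS]
    exact hρ
  refine Real.sSup_le (fun r hr => ?_) hρ
  obtain ⟨s₁, hs₁, hr₁⟩ := hle₁ r hr
  obtain ⟨s₂, -, hr₂⟩ := hle₂ r hr
  by_cases hS₁ : BddAbove S₁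
  · by_cases hS₂ : BddAbove S₂
    · calc r ≤ s₁ * sSup S₂ := hr₁ _ fun _ hs => le_csSup hS₂ hs
        _ ≤ sSup S₁ * sSup S₂ := mul_le_mul_of_nonneg_right (le_csSup hS₁ hs₁) hρ₂
    · have := hr₂ 0 (zero_mem_upperBounds_of_mul_mem_of_not_bddAbove hS
        (fun b hb a ha => mul_comm a b ▸ hmul a ha b hb) hS₂)
      linarith
  · have := hr₁ 0 (zero_mem_upperBounds_of_mul_mem_of_not_bddAbove hS hmul hS₁)
    linarith

/-- The Hellinger transform is sub-multiplicative under products: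
for classes `P1, P2, Q1, Q2` of (densities of) finite measures and `0 < α < 1`,
`ρ_α(P1 × P2, Q1 × Q2) ≤ ρ_α(P1, Q1) · ρ_α(P2, Q2)`, where `P1 × P2` denotes the class of
product densities `(x,y) ↦ p1(x) p2(y)` with `p1 ∈ P1`, `p2 ∈ P2`, relative to `μ1 × μ2`. -/
theorem stmt11 {X Y : Type*} [MeasurableSpace X] [MeasurableSpace Y]
    (μ1 : Measure X) (μ2 : Measure Y) [SigmaFinite μ1] [SigmaFinite μ2]
    (P1 Q1 : Set (X → ℝ)) (P2 Q2 : Set (Y → ℝ))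
    (hP1 : ∀ p ∈ P1, Measurable p ∧ (∀ x, 0 ≤ p x) ∧ Integrable p μ1)
    (hQ1 : ∀ q ∈ Q1, Measurable q ∧ (∀ x, 0 ≤ q x) ∧ Integrable q μ1)
    (hP2 : ∀ p ∈ P2, Measurable p ∧ (∀ y, 0 ≤ p y) ∧ Integrable p μ2)
    (hQ2 : ∀ q ∈ Q2, Measurable q ∧ (∀ y, 0 ≤ q y) ∧ Integrable q μ2)
    (α : ℝ) (hα : α ∈ Set.Ioo (0 : ℝ) 1) :
    rhoHull (μ1.prod μ2) α
      {f | ∃ p1 ∈ P1, ∃ p2 ∈ P2, f = fun z : X × Y => p1 z.1 * p2 z.2}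
      {f | ∃ q1 ∈ Q1, ∃ q2 ∈ Q2, f = fun z : X × Y => q1 z.1 * q2 z.2} ≤
    rhoHull μ1 α P1 Q1 * rhoHull μ2 α P2 Q2 := by
  change sSup (hellingerSet _ α (prodClass P1 P2) (prodClass Q1 Q2)) ≤
    sSup (hellingerSet μ1 α P1 Q1) * sSup (hellingerSet μ2 α P2 Q2)
  have hα' := Set.Ioo_subset_Icc_self hα
  exact Real.sSup_le_sSup_mul_sSup (hellingerSet_nonneg hP1 hQ1) (hellingerSet_nonneg hP2 hQ2)
    (fun _ hs₁ _ hs₂ => mul_mem_hellingerSet_prod μ1 μ2 hP1 hQ1 hP2 hQ2 hs₁ hs₂)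
    (fun _ hr => exists_mem_hellingerSet_le_mul_of_mem_upperBounds μ1 μ2 hP1 hQ1 hP2 hQ2 hα' hr)
    (fun _ hr => exists_mem_hellingerSet_le_mul_of_mem_upperBounds μ2 μ1 hP2 hQ2 hP1 hQ1 hα'
      (hellingerSet_prod_subset_swap μ1 μ2 _ _ _ _ hr))
end

section
/- For a probability measure P and finite measure Q with densities p, q, the right derivative of α ↦ ρ_α(Q,P) = P(q/p)^α at α = 0 equals P[ log(q/p) · 1{q > 0} ] (possibly equal to -∞): that is, α^{-1}(ρ_α(Q,P) - P(q>0)) decreases to P log(q/p) 1{q>0} as α ↓ 0. -/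
/-!
For `r = q/p` the quotient is `∫_{q>0} slope (r ^ ·) 0 α · p`. Convexity of `α ↦ r ^ α` makes the
slope increase with `α`, and its limit as `α ↓ 0` is the derivative `log r`. The slopes are thus
squeezed between `log r` and the slope at `α = 1/2`, so dominated convergence passes to the limit
when `log r · p` is integrable. Otherwise the integrals cannot stay bounded below: monotone
convergence, applied along a sequence `α_n ↓ 0` to the increasing differences between the slope at
`α_0` and the slope at `α_n`, would make the limit integrable.
-/

open MeasureTheory Real Filter Set Topology

lemma slope_rpow_zero (r α : ℝ) : slope (fun β : ℝ => r ^ β) 0 α = α⁻¹ * (r ^ α - 1) := by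
  simp [slope_def_field, div_eq_inv_mul]

lemma monotoneOn_slope_rpow_zero {r : ℝ} (hr : 0 ≤ r) :
    MonotoneOn (slope (fun β : ℝ => r ^ β) 0) (Ioi 0) := by
  rcases hr.eq_or_lt with rfl | hr
  · intro α hα β hβ hαβ
    simp only [slope_rpow_zero, zero_rpow (ne_of_gt hα), zero_rpow (ne_of_gt hβ)]
    simpa using inv_anti₀ hα hαβ
  · exact ((convexOn_rpow_left hr).slope_mono (mem_univ 0)).mono fun α hα =>
      ⟨mem_univ α, ne_of_gt hα⟩

lemma tendsto_slope_rpow_zero {r : ℝ} (hr : 0 < r) :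
    Tendsto (slope (fun β : ℝ => r ^ β) 0) (𝓝[>] 0) (𝓝 (log r)) := by
  have h := (hasStrictDerivAt_const_rpow hr 0).hasDerivAt.tendsto_slope
  rw [rpow_zero, one_mul] at h
  exact h.mono_left (nhdsWithin_mono 0 fun α hα => ne_of_gt hα)

section OrderTopology

variable {α β : Type*} [LinearOrder α] [TopologicalSpace α] [OrderTopology α]
  [LinearOrder β] {f : α → β} {a c : α}

lemma MonotoneOn.le_of_tendsto_nhdsGT [DenselyOrdered α] [TopologicalSpace β]
    [ClosedIicTopology β] {L : β}
    (hf : MonotoneOn f (Ioc a c)) (hL : Tendsto f (𝓝[>] a) (𝓝 L)) {x : α} (hx : x ∈ Ioc a c) :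
    L ≤ f x :=
  have := nhdsGT_neBot_of_exists_gt ⟨x, hx.1⟩
  le_of_tendsto hL <| eventually_of_mem (Ioc_mem_nhdsGT hx.1) fun _ hy =>
    hf ⟨hy.1, hy.2.trans hx.2⟩ hx hy.2

lemma MonotoneOn.tendsto_nhdsGT_atBot (hf : MonotoneOn f (Ioc a c))
    (hbdd : ¬BddBelow (f '' Ioc a c)) : Tendsto f (𝓝[>] a) atBot := by
  refine tendsto_atBot.2 fun b => ?_
  obtain ⟨_, ⟨x, hx, rfl⟩, hxb⟩ := not_bddBelow_iff.1 hbdd b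
  exact eventually_of_mem (Ioc_mem_nhdsGT hx.1) fun y hy =>
    (hf ⟨hy.1, hy.2.trans hx.2⟩ hx hy.2).trans hxb.le

end OrderTopology

section MonotoneConvergence

variable {X : Type*} [MeasurableSpace X] {μ : Measure X}

lemma integrable_of_tendsto_of_antitone_of_bddBelow {f : ℕ → X → ℝ} {g : X → ℝ}
    (hf : ∀ n, Integrable (f n) μ) (h_anti : ∀ᵐ x ∂μ, Antitone (f · x))
    (h_lim : ∀ᵐ x ∂μ, Tendsto (f · x) atTop (𝓝 (g x)))
    (h_bdd : BddBelow (range fun n => ∫ x, f n x ∂μ)) : Integrable g μ := by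
  obtain ⟨b, hb⟩ := h_bdd
  have h_nonneg : ∀ n, 0 ≤ᵐ[μ] fun x => f 0 x - f n x := fun n => by
    filter_upwards [h_anti] with x hx using sub_nonneg.2 (hx (Nat.zero_le n))
  have h_lintegral : ∀ n, ∫⁻ x, ENNReal.ofReal (f 0 x - f n x) ∂μ
      ≤ ENNReal.ofReal (∫ x, f 0 x ∂μ - b) := fun n => by
    rw [← ofReal_integral_eq_lintegral_ofReal (f := fun x => f 0 x - f n x)
      ((hf 0).sub (hf n)) (h_nonneg n), integral_sub (hf 0) (hf n)]
    exact ENNReal.ofReal_le_ofReal (sub_le_sub_left (hb ⟨n, rfl⟩) _)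
  have h_mct : Tendsto (fun n => ∫⁻ x, ENNReal.ofReal (f 0 x - f n x) ∂μ) atTop
      (𝓝 (∫⁻ x, ENNReal.ofReal (f 0 x - g x) ∂μ)) := by
    refine lintegral_tendsto_of_tendsto_of_monotone
      (fun n => ((hf 0).sub (hf n)).aemeasurable.ennreal_ofReal) ?_ ?_
    · filter_upwards [h_anti] with x hx n m hnm
      exact ENNReal.ofReal_le_ofReal (sub_le_sub_left (hx hnm) _)
    · filter_upwards [h_lim] with x hx
      exact (ENNReal.continuous_ofReal.tendsto _).comp (tendsto_const_nhds.sub hx)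
  have hg_meas : AEStronglyMeasurable g μ :=
    aestronglyMeasurable_of_tendsto_ae _ (fun n => (hf n).1) h_lim
  have h_diff : Integrable (fun x => f 0 x - g x) μ := by
    refine ⟨(hf 0).1.sub hg_meas, (hasFiniteIntegral_iff_ofReal ?_).2 ?_⟩
    · filter_upwards [h_anti, h_lim] with x hx hxg
      exact sub_nonneg.2 (le_of_tendsto' hxg fun n => hx (Nat.zero_le n))
    · exact (le_of_tendsto' h_mct h_lintegral).trans_lt ENNReal.ofReal_lt_top
  exact ((hf 0).sub h_diff).congr (ae_of_all _ fun x => sub_sub_cancel (f 0 x) (g x))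

variable {F : ℝ → X → ℝ} {g : X → ℝ} {s : Set ℝ} {a c : ℝ}

lemma monotoneOn_integral_of_ae_monotoneOn (hF : ∀ t ∈ s, Integrable (F t) μ)
    (h_mono : ∀ᵐ x ∂μ, MonotoneOn (F · x) s) : MonotoneOn (fun t => ∫ x, F t x ∂μ) s :=
  fun _ ht _ hu htu => integral_mono_ae (hF _ ht) (hF _ hu) <| by
    filter_upwards [h_mono] with x hx using hx ht hu htu

lemma tendsto_integral_nhdsGT_of_monotoneOn (hac : a < c)
    (hF : ∀ t ∈ Ioc a c, Integrable (F t) μ)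
    (h_mono : ∀ᵐ x ∂μ, MonotoneOn (F · x) (Ioc a c))
    (h_lim : ∀ᵐ x ∂μ, Tendsto (F · x) (𝓝[>] a) (𝓝 (g x))) (hg : Integrable g μ) :
    Tendsto (fun t => ∫ x, F t x ∂μ) (𝓝[>] a) (𝓝 (∫ x, g x ∂μ)) := by
  have hc : c ∈ Ioc a c := ⟨hac, le_rfl⟩
  refine tendsto_integral_filter_of_dominated_convergence (fun x => max |g x| |F c x|)
    (eventually_of_mem (Ioc_mem_nhdsGT hac) fun t ht => (hF t ht).1)
    (eventually_of_mem (Ioc_mem_nhdsGT hac) fun t ht => ?_) (hg.abs.sup (hF c hc).abs) h_lim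
  filter_upwards [h_mono, h_lim] with x hx hxg
  exact abs_le_max_abs_abs (hx.le_of_tendsto_nhdsGT hxg ht) (hx ht hc ht.2)

lemma tendsto_integral_nhdsGT_atBot_of_monotoneOn (hac : a < c)
    (hF : ∀ t ∈ Ioc a c, Integrable (F t) μ) (h_mono : ∀ᵐ x ∂μ, MonotoneOn (F · x) (Ioc a c))
    (h_lim : ∀ᵐ x ∂μ, Tendsto (F · x) (𝓝[>] a) (𝓝 (g x))) (hg : ¬Integrable g μ) :
    Tendsto (fun t => ∫ x, F t x ∂μ) (𝓝[>] a) atBot := by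
  refine (monotoneOn_integral_of_ae_monotoneOn hF h_mono).tendsto_nhdsGT_atBot fun h_bdd => hg ?_
  obtain ⟨u, hu_anti, hu_mem, hu_lim⟩ := exists_seq_strictAnti_tendsto' hac
  have hu : ∀ n, u n ∈ Ioc a c := fun n => Ioo_subset_Ioc_self (hu_mem n)
  have hu_lim' : Tendsto u atTop (𝓝[>] a) :=
    tendsto_nhdsWithin_iff.2 ⟨hu_lim, Eventually.of_forall fun n => (hu_mem n).1⟩
  refine integrable_of_tendsto_of_antitone_of_bddBelow (f := fun n => F (u n))
    (fun n => hF _ (hu n)) ?_ ?_ (h_bdd.mono ?_)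
  · filter_upwards [h_mono] with x hx n m hnm using hx (hu m) (hu n) (hu_anti.antitone hnm)
  · filter_upwards [h_lim] with x hx using hx.comp hu_lim'
  · rintro _ ⟨n, rfl⟩
    exact ⟨u n, hu n, rfl⟩

end MonotoneConvergence

section DensityQuotient

variable {X : Type*} [MeasurableSpace X] {μ : Measure X} {p q : X → ℝ} {α : ℝ}

lemma integrable_slope_rpow_mul (hpi : Integrable p μ)
    (hint : Integrable (fun x => (q x / p x) ^ α * p x) μ) (s : Set X) :
    Integrable (fun x => slope (fun β => (q x / p x) ^ β) 0 α * p x) (μ.restrict s) :=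
  ((hint.restrict.sub hpi.restrict).const_mul α⁻¹).congr <| ae_of_all _ fun x => by
    simp only [Pi.sub_apply, slope_rpow_zero]
    ring

lemma inv_mul_integral_rpow_sub_eq_setIntegral (hq : ∀ x, 0 ≤ q x) (hpi : Integrable p μ)
    (hα : 0 < α) (hint : Integrable (fun x => (q x / p x) ^ α * p x) μ) :
    α⁻¹ * ((∫ x, (q x / p x) ^ α * p x ∂μ) - ∫ x in {x | 0 < q x}, p x ∂μ)
      = ∫ x in {x | 0 < q x}, slope (fun β => (q x / p x) ^ β) 0 α * p x ∂μ := by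
  have h_off : ∀ x ∉ {x | 0 < q x}, (q x / p x) ^ α * p x = 0 := fun x hx => by
    rw [(hq x).antisymm' (not_lt.1 hx), zero_div, zero_rpow hα.ne', zero_mul]
  rw [← setIntegral_eq_integral_of_forall_compl_eq_zero h_off,
    ← integral_sub hint.restrict hpi.restrict, ← integral_const_mul]
  congr 1 with x
  rw [slope_rpow_zero]
  ring

lemma tendsto_slope_rpow_mul {u v : ℝ} (hu : 0 < u) (hv : 0 ≤ v) :
    Tendsto (fun α : ℝ => slope (fun β : ℝ => (u / v) ^ β) 0 α * v) (𝓝[>] 0)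
      (𝓝 (log (u / v) * v)) := by
  rcases hv.eq_or_lt with rfl | hv
  · simp
  · exact (tendsto_slope_rpow_zero (div_pos hu hv)).mul_const v

end DensityQuotient

theorem stmt13_general {X : Type*} [MeasurableSpace X] (μ : Measure X)
    (p q : X → ℝ) (hqm : Measurable q)
    (hp : ∀ x, 0 ≤ p x) (hq : ∀ x, 0 ≤ q x)
    (hpi : Integrable p μ)
    (hint : ∀ α ∈ Set.Ioc (0 : ℝ) (1 / 2),
      Integrable (fun x => (q x / p x) ^ α * p x) μ) :
    MonotoneOn
      (fun α : ℝ => α⁻¹ *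
        ((∫ x, (q x / p x) ^ α * p x ∂μ) - ∫ x in {x | 0 < q x}, p x ∂μ))
      (Set.Ioc (0 : ℝ) (1 / 2)) ∧
    ((Integrable (fun x => Real.log (q x / p x) * p x)
        (μ.restrict {x | 0 < q x}) →
      Tendsto
        (fun α : ℝ => α⁻¹ *
          ((∫ x, (q x / p x) ^ α * p x ∂μ) - ∫ x in {x | 0 < q x}, p x ∂μ))
        (nhdsWithin 0 (Set.Ioi 0))
        (nhds (∫ x in {x | 0 < q x}, Real.log (q x / p x) * p x ∂μ))) ∧
     (¬ Integrable (fun x => Real.log (q x / p x) * p x)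
        (μ.restrict {x | 0 < q x}) →
      Tendsto
        (fun α : ℝ => α⁻¹ *
          ((∫ x, (q x / p x) ^ α * p x ∂μ) - ∫ x in {x | 0 < q x}, p x ∂μ))
        (nhdsWithin 0 (Set.Ioi 0)) atBot)) := by
  set F : ℝ → X → ℝ := fun α x => slope (fun β => (q x / p x) ^ β) 0 α * p x
  have hc : (0 : ℝ) < 1 / 2 := by norm_num
  have hF : ∀ α ∈ Ioc (0 : ℝ) (1 / 2), Integrable (F α) (μ.restrict {x | 0 < q x}) :=
    fun α hα => integrable_slope_rpow_mul hpi (hint α hα) _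
  have h_mono : ∀ᵐ x ∂μ.restrict {x | 0 < q x}, MonotoneOn (F · x) (Ioc 0 (1 / 2)) :=
    ae_of_all _ fun x _ hα _ hβ hαβ => mul_le_mul_of_nonneg_right
      (monotoneOn_slope_rpow_zero (div_nonneg (hq x) (hp x)) hα.1 hβ.1 hαβ) (hp x)
  have h_lim : ∀ᵐ x ∂μ.restrict {x | 0 < q x},
      Tendsto (F · x) (𝓝[>] 0) (𝓝 (log (q x / p x) * p x)) := by
    filter_upwards [ae_restrict_mem (measurableSet_lt measurable_const hqm)] with x hx
    exact tendsto_slope_rpow_mul hx (hp x)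
  have h_repr : EqOn (fun α : ℝ => α⁻¹ *
      ((∫ x, (q x / p x) ^ α * p x ∂μ) - ∫ x in {x | 0 < q x}, p x ∂μ))
      (fun α => ∫ x in {x | 0 < q x}, F α x ∂μ) (Ioc 0 (1 / 2)) :=
    fun α hα => inv_mul_integral_rpow_sub_eq_setIntegral hq hpi hα.1 (hint α hα)
  have h_near := (h_repr.eventuallyEq_of_mem (Ioc_mem_nhdsGT hc)).symm
  refine ⟨(monotoneOn_integral_of_ae_monotoneOn hF h_mono).congr h_repr.symm,
    fun hg => ?_, fun hg => ?_⟩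
  · exact (tendsto_integral_nhdsGT_of_monotoneOn hc hF h_mono h_lim hg).congr' h_near
  · exact (tendsto_integral_nhdsGT_atBot_of_monotoneOn hc hF h_mono h_lim hg).congr' h_near

/-- For a probability measure `P` with density `p` and a finite measure `Q` with
density `q`, the quotient `α⁻¹ (ρ_α(Q,P) - P(q > 0))` decreases, as `α ↓ 0`, to
`P[log(q/p) 1{q>0}]` (possibly `-∞`): it is monotone in `α` on `(0, 1/2]`, tends to the
integral when the latter exists, and tends to `-∞` when it does not. -/
theorem stmt13 {X : Type*} [MeasurableSpace X] (μ : Measure X) [SigmaFinite μ]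
    (p q : X → ℝ) (hpm : Measurable p) (hqm : Measurable q)
    (hp : ∀ x, 0 ≤ p x) (hq : ∀ x, 0 ≤ q x)
    (hpi : Integrable p μ) (hqi : Integrable q μ)
    (hp1 : ∫ x, p x ∂μ = 1)
    (hint : ∀ α ∈ Set.Ioc (0 : ℝ) (1 / 2),
      Integrable (fun x => (q x / p x) ^ α * p x) μ) :
    MonotoneOn
      (fun α : ℝ => α⁻¹ *
        ((∫ x, (q x / p x) ^ α * p x ∂μ) - ∫ x in {x | 0 < q x}, p x ∂μ))
      (Set.Ioc (0 : ℝ) (1 / 2)) ∧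
    ((Integrable (fun x => Real.log (q x / p x) * p x)
        (μ.restrict {x | 0 < q x}) →
      Tendsto
        (fun α : ℝ => α⁻¹ *
          ((∫ x, (q x / p x) ^ α * p x ∂μ) - ∫ x in {x | 0 < q x}, p x ∂μ))
        (nhdsWithin 0 (Set.Ioi 0))
        (nhds (∫ x in {x | 0 < q x}, Real.log (q x / p x) * p x ∂μ))) ∧
     (¬ Integrable (fun x => Real.log (q x / p x) * p x)
        (μ.restrict {x | 0 < q x}) →
      Tendsto
        (fun α : ℝ => α⁻¹ *
          ((∫ x, (q x / p x) ^ α * p x ∂μ) - ∫ x in {x | 0 < q x}, p x ∂μ))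
        (nhdsWithin 0 (Set.Ioi 0)) atBot)) :=
  stmt13_general μ p q hqm hp hq hpi hint
end

section
/- Suppose P* ∈ P, P0 log(p0/p*) < ∞, P0(p/p*) < ∞, and sup_{0<α<1} -log P0(p/p*)^α > 0 for a density p with P0(p > 0) = 1. Then P0 log(p0/p*) < P0 log(p0/p); i.e., p* has strictly smaller Kullback–Leibler divergence from P0 than p. -/
open MeasureTheory Real

/-!
Write `F = p / p*`. Since `log y ≤ y - 1`, applied to `y = F^α`, gives `α log F ≤ F^α - 1`,
integrating against `P0` yields `α P0 log F ≤ P0 F^α - 1 < 0` for an `α` at which the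
affinity `P0 F^α` is below `1`. Hence `P0 log(p/p*) < 0`, and
`P0 log(p0/p*) = P0 log(p0/p) + P0 log(p/p*)`.
-/

lemma Real.exists_mem_pos_of_biSup_pos {ι : Type*} {s : Set ι} {f : ι → ℝ}
    (h : 0 < ⨆ i ∈ s, f i) : ∃ i ∈ s, 0 < f i := by
  contrapose! h
  exact Real.iSup_nonpos fun i => Real.iSup_nonpos fun hi => h i hi

lemma Real.mul_log_le_rpow_sub_one {x : ℝ} (hx : 0 < x) (α : ℝ) :
    α * log x ≤ x ^ α - 1 := by
  rw [← Real.log_rpow hx]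
  exact Real.log_le_sub_one_of_pos (Real.rpow_pos_of_pos hx α)

lemma Real.log_div_eq_log_div_add_log_div {a b c : ℝ} (ha : a ≠ 0) (hb : b ≠ 0) (hc : c ≠ 0) :
    log (a / c) = log (a / b) + log (b / c) := by
  rw [← Real.log_mul (div_ne_zero ha hb) (div_ne_zero hb hc), div_mul_div_cancel₀ hb]

namespace MeasureTheory

variable {X : Type*} [MeasurableSpace X]

lemma isProbabilityMeasure_withDensity_ofReal {μ : Measure X} {f : X → ℝ} (hf : ∀ x, 0 ≤ f x)
    (hf1 : ∫ x, f x ∂μ = 1) :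
    IsProbabilityMeasure (μ.withDensity fun x => ENNReal.ofReal (f x)) := by
  have hfi : Integrable f μ := Integrable.of_integral_ne_zero (by simp [hf1])
  constructor
  rw [withDensity_apply _ MeasurableSet.univ, Measure.restrict_univ,
    ← ofReal_integral_eq_lintegral_ofReal hfi (Filter.Eventually.of_forall hf), hf1,
    ENNReal.ofReal_one]

lemma ae_withDensity_ofReal_pos {μ : Measure X} {f : X → ℝ} (hf : AEMeasurable f μ) :
    ∀ᵐ x ∂μ.withDensity (fun x => ENNReal.ofReal (f x)), 0 < f x := by
  rw [ae_withDensity_iff' hf.ennreal_ofReal]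
  filter_upwards with x hx
  exact ENNReal.ofReal_pos.mp (pos_iff_ne_zero.mpr hx)

/-- Since `log 0 = 0` and a non-integrable function has integral `0`, a negative `log` of the
integral already forces integrability. -/
lemma integrable_and_integral_lt_one_of_log_integral_neg {P : Measure X} {f : X → ℝ}
    (hf : 0 ≤ᵐ[P] f) (h : log (∫ x, f x ∂P) < 0) : Integrable f P ∧ ∫ x, f x ∂P < 1 := by
  have hne : ∫ x, f x ∂P ≠ 0 := fun h0 => by simp [h0] at h
  have hpos : 0 < ∫ x, f x ∂P := (integral_nonneg_of_ae hf).lt_of_ne' hne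
  exact ⟨Integrable.of_integral_ne_zero hne, (Real.log_neg_iff hpos).mp h⟩

lemma integral_log_neg_of_integral_rpow_lt_one {P : Measure X} [IsProbabilityMeasure P]
    {F : X → ℝ} {α : ℝ} (hF : ∀ᵐ x ∂P, 0 < F x) (hlog : Integrable (fun x => log (F x)) P)
    (hα : 0 < α) (hrpow : Integrable (fun x => F x ^ α) P) (hlt : ∫ x, F x ^ α ∂P < 1) :
    ∫ x, log (F x) ∂P < 0 := by
  have hmono : α * ∫ x, log (F x) ∂P ≤ (∫ x, F x ^ α ∂P) - 1 :=
    calc α * ∫ x, log (F x) ∂P = ∫ x, α * log (F x) ∂P := (integral_const_mul _ _).symm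
      _ ≤ ∫ x, (F x ^ α - 1) ∂P :=
        integral_mono_ae (hlog.const_mul α) (hrpow.sub (integrable_const 1))
          (hF.mono fun x hx => Real.mul_log_le_rpow_sub_one hx α)
      _ = (∫ x, F x ^ α ∂P) - 1 := by simp [integral_sub hrpow (integrable_const 1)]
  exact neg_of_mul_neg_right (hmono.trans_lt (sub_neg.mpr hlt)) hα.le

end MeasureTheory

theorem stmt14_general {X : Type*} [MeasurableSpace X] (μ : Measure X)
    (p0 p pstar : X → ℝ)
    (hp0 : ∀ x, 0 ≤ p0 x)
    (hp01 : ∫ x, p0 x ∂μ = 1)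
    (P0 : Measure X) (hP0 : P0 = μ.withDensity (fun x => ENNReal.ofReal (p0 x)))
    (hpspos : ∀ᵐ x ∂P0, 0 < pstar x)
    (hppos : ∀ᵐ x ∂P0, 0 < p x)
    (hklfin : Integrable (fun x => Real.log (p0 x / pstar x)) P0)
    (hsup : 0 < ⨆ α ∈ Set.Ioo (0 : ℝ) 1,
      -Real.log (∫ x, (p x / pstar x) ^ α ∂P0)) :
    (¬ Integrable (fun x => Real.log (p0 x / p x)) P0) ∨
      (∫ x, Real.log (p0 x / pstar x) ∂P0) < ∫ x, Real.log (p0 x / p x) ∂P0 := by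
  have hp0int : Integrable p0 μ := Integrable.of_integral_ne_zero (by simp [hp01])
  have : IsProbabilityMeasure P0 := hP0 ▸ isProbabilityMeasure_withDensity_ofReal hp0 hp01
  have hp0pos : ∀ᵐ x ∂P0, 0 < p0 x := hP0 ▸ ae_withDensity_ofReal_pos hp0int.aemeasurable
  have hratio : ∀ᵐ x ∂P0, 0 < p x / pstar x := by
    filter_upwards [hppos, hpspos] with x hpx hpsx using div_pos hpx hpsx
  obtain ⟨α, hα, hlog⟩ := Real.exists_mem_pos_of_biSup_pos hsup
  obtain ⟨hrpow, hlt⟩ := integrable_and_integral_lt_one_of_log_integral_neg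
    (hratio.mono fun x hx => (Real.rpow_pos_of_pos hx α).le) (neg_pos.mp hlog)
  refine or_iff_not_imp_left.mpr fun hkl => ?_
  rw [not_not] at hkl
  have hsplit : (fun x => log (p0 x / pstar x))
      =ᵐ[P0] fun x => log (p0 x / p x) + log (p x / pstar x) := by
    filter_upwards [hp0pos, hppos, hpspos] with x h0 h1 h2
    exact Real.log_div_eq_log_div_add_log_div h0.ne' h1.ne' h2.ne'
  have hlogratio : Integrable (fun x => log (p x / pstar x)) P0 :=
    (hklfin.sub hkl).congr <| hsplit.mono fun x hx => by
      simp only [Pi.sub_apply] at hx ⊢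
      linarith
  rw [integral_congr_ae hsplit, integral_add hkl hlogratio]
  linarith [integral_log_neg_of_integral_rpow_lt_one hratio hlogratio hα.1 hrpow hlt]

/-- If `P0 log(p0/p*) < ∞`, `P0(p/p*) < ∞`, `P0(p > 0) = 1` and
`sup_{0<α<1} -log P0 (p/p*)^α > 0`, then `p*` has strictly smaller Kullback–Leibler divergence
from `P0` than `p` (the divergence to `p` possibly being infinite). -/
theorem stmt14 {X : Type*} [MeasurableSpace X] (μ : Measure X) [SigmaFinite μ]
    (p0 p pstar : X → ℝ) (hp0m : Measurable p0) (hpm : Measurable p)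
    (hpsm : Measurable pstar)
    (hp0 : ∀ x, 0 ≤ p0 x) (hp : ∀ x, 0 ≤ p x) (hps : ∀ x, 0 ≤ pstar x)
    (hp01 : ∫ x, p0 x ∂μ = 1) (hp1 : ∫ x, p x ∂μ = 1) (hps1 : ∫ x, pstar x ∂μ = 1)
    (P0 : Measure X) (hP0 : P0 = μ.withDensity (fun x => ENNReal.ofReal (p0 x)))
    (hpspos : ∀ᵐ x ∂P0, 0 < pstar x)
    (hppos : ∀ᵐ x ∂P0, 0 < p x)
    (hklfin : Integrable (fun x => Real.log (p0 x / pstar x)) P0)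
    (hratio : Integrable (fun x => p x / pstar x) P0)
    (hsup : 0 < ⨆ α ∈ Set.Ioo (0 : ℝ) 1,
      -Real.log (∫ x, (p x / pstar x) ^ α ∂P0)) :
    (¬ Integrable (fun x => Real.log (p0 x / p x)) P0) ∨
      (∫ x, Real.log (p0 x / pstar x) ∂P0) < ∫ x, Real.log (p0 x / p x) ∂P0 :=
  stmt14_general μ p0 p pstar hp0 hp01 P0 hP0 hpspos hppos hklfin hsup
end

section
/- There exists a constant ε_b > 0 for every b > 0 such that for every probability measure P with density p and finite measure Q with density q satisfying 0 < h²(p,q) < ε_b P(p/q)^b: P (log(p/q))² ≲ h²(p,q) (1 + (1/b) log₊(1/h(p,q)) + (1/b) log₊ P(p/q)^b)², where h²(p,q) = ∫(√p - √q)² dμ is the squared Hellinger distance and ≲ denotes inequality up to a universal constant. -/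
open MeasureTheory Real

lemma lemA (v : ℝ) (hv : 0 ≤ v) :
    (Real.log v)^2 * v ≤ 100 * (1 + max (Real.log v) 0)^2 * (Real.sqrt v - 1)^2 := by
  rcases hv.eq_or_lt with h0 | h0
  · simp [← h0]
  have hw0 : 0 < Real.sqrt v := Real.sqrt_pos.mpr h0
  set w := Real.sqrt v with hwdef
  have hv2 : v = w * w := (Real.mul_self_sqrt hv).symm
  have hlog : Real.log v = 2 * Real.log w := by
    rw [hv2, Real.log_mul (ne_of_gt hw0) (ne_of_gt hw0)]; ring
  rcases le_or_gt w 1 with hle | hgt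
  · have hlw : Real.log w ≤ 0 := Real.log_nonpos hw0.le hle
    have hmax : max (Real.log v) 0 = 0 := max_eq_right (by rw [hlog]; linarith)
    have key : -Real.log w * w ≤ 1 - w := by
      have h1 : Real.log w⁻¹ ≤ w⁻¹ - 1 := Real.log_le_sub_one_of_pos (by positivity)
      rw [Real.log_inv] at h1
      have h2 := mul_le_mul_of_nonneg_right h1 hw0.le
      rw [sub_mul, inv_mul_cancel₀ (ne_of_gt hw0)] at h2
      linarith
    have hnn : 0 ≤ -Real.log w * w := mul_nonneg (by linarith) hw0.le
    rw [hmax, hlog, hv2]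
    nlinarith [key, hnn, hle]
  · have hlw : 0 < Real.log w := Real.log_pos hgt
    have hmax : max (Real.log v) 0 = Real.log v := max_eq_left (by rw [hlog]; linarith)
    rw [hmax, hlog, hv2]
    rcases le_or_gt w 2 with h2 | h2
    · have h1 : Real.log w ≤ w - 1 := Real.log_le_sub_one_of_pos hw0
      have e1 : Real.log w * w ≤ 2*(w-1) := by nlinarith
      have e2 : (1:ℝ) ≤ (1+2*Real.log w)^2 := by nlinarith
      have e3 : (Real.log w * w)^2 ≤ 4*(w-1)^2 := by
        nlinarith [mul_nonneg hlw.le hw0.le]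
      have e4 : 100*(w-1)^2 ≤ 100*(1+2*Real.log w)^2*(w-1)^2 := by
        nlinarith [sq_nonneg (w-1)]
      nlinarith [e3, e4]
    · have h1 : 4*(Real.log w)^2 ≤ (1+2*Real.log w)^2 := by nlinarith
      have h2' : w^2/4 ≤ (w-1)^2 := by nlinarith
      have h3 := mul_le_mul h1 h2' (by positivity) (by positivity)
      nlinarith [h3, sq_nonneg ((1+2*Real.log w)*(w-1))]

lemma lemC (b T v : ℝ) (hb : 0 < b) (hT0 : 0 < T) (hT : 2/b ≤ Real.log T) (hv : 0 ≤ v) :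
    (Real.log v)^2 * v ≤
      100 * (1 + Real.log T)^2 * (Real.sqrt v - 1)^2
        + (Real.log T)^2 / T ^ b * (v ^ b * v) := by
  have hlT : 0 < Real.log T := lt_of_lt_of_le (by positivity) hT
  have hTb : 0 < T ^ b := Real.rpow_pos_of_pos hT0 b
  have hT1 : 1 < T := by
    have h := Real.exp_lt_exp.mpr hlT
    rwa [Real.exp_zero, Real.exp_log hT0] at h
  rcases le_or_gt v T with hvT | hvT
  · have h1 := lemA v hv
    have hmax : max (Real.log v) 0 ≤ Real.log T := by
      rcases hv.eq_or_lt with h0 | h0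
      · simp [← h0, hlT.le]
      · exact max_le (Real.log_le_log h0 hvT) hlT.le
    have h2 : (1 + max (Real.log v) 0)^2 ≤ (1 + Real.log T)^2 := by
      have hnn : (0:ℝ) ≤ max (Real.log v) 0 := le_max_right _ _
      nlinarith
    have h3 : 100 * (1 + max (Real.log v) 0)^2 * (Real.sqrt v - 1)^2 ≤
        100 * (1 + Real.log T)^2 * (Real.sqrt v - 1)^2 := by
      nlinarith [sq_nonneg (Real.sqrt v - 1)]
    have h4 : 0 ≤ (Real.log T)^2 / T^b * (v^b * v) := by positivity
    linarith
  · have hv0 : 0 < v := lt_trans hT0 hvT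
    have lv0 : 0 ≤ Real.log v := Real.log_nonneg (by linarith)
    set t := Real.log v - Real.log T with ht
    have ht0 : 0 ≤ t := by
      have := Real.log_le_log hT0 hvT.le
      simp only [ht]; linarith
    have hTb2 : 1 ≤ Real.log T * (b/2) := by
      rw [div_le_iff₀ hb] at hT
      nlinarith
    have e3 : t ≤ Real.log T * (b/2*t) := by nlinarith
    have e2 : 1 + b/2*t ≤ Real.exp (b/2*t) := by
      have := Real.add_one_le_exp (b/2*t); linarith
    have e1 : Real.log v ≤ Real.log T * Real.exp (b/2*t) := by
      have step1 : Real.log v ≤ Real.log T * (1 + b/2*t) := by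
        have : Real.log v = Real.log T + t := by rw [ht]; ring
        nlinarith [e3]
      nlinarith [e2, hlT]
    have e5 : (Real.log v)^2 ≤ (Real.log T)^2 * (Real.exp (b/2*t))^2 := by
      nlinarith [e1, lv0, Real.exp_pos (b/2*t), hlT]
    have e6 : (Real.exp (b/2*t))^2 = Real.exp (b*t) := by
      rw [sq, ← Real.exp_add]; congr 1; ring
    have e7 : Real.exp (b*t) = v^b / T^b := by
      rw [Real.rpow_def_of_pos hv0, Real.rpow_def_of_pos hT0, ← Real.exp_sub]
      congr 1; rw [ht]; ring
    have key : (Real.log v)^2 ≤ (Real.log T)^2 * (v^b / T^b) := by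
      rw [← e7, ← e6]; exact e5
    have h1 : (Real.log v)^2 * v ≤ (Real.log T)^2/T^b * (v^b * v) := by
      have hm := mul_le_mul_of_nonneg_right key hv
      have hr : (Real.log T)^2 * (v^b/T^b) * v = (Real.log T)^2/T^b * (v^b*v) := by ring
      linarith [hr ▸ hm]
    have h0 : 0 ≤ 100*(1+Real.log T)^2*(Real.sqrt v - 1)^2 := by positivity
    linarith

lemma lemD (b T P Q : ℝ) (hb : 0 < b) (hT0 : 0 < T) (hT : 2/b ≤ Real.log T)
    (hP : 0 ≤ P) (hQ : 0 ≤ Q) :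
    (Real.log (P/Q))^2 * P ≤
      100 * (1 + Real.log T)^2 * (Real.sqrt P - Real.sqrt Q)^2
        + (Real.log T)^2 / T^b * ((P/Q)^b * P) := by
  have hlT : 0 < Real.log T := lt_of_lt_of_le (by positivity) hT
  have hTb : 0 < T ^ b := Real.rpow_pos_of_pos hT0 b
  rcases hQ.eq_or_lt with h0 | h0
  · rw [← h0]
    simp only [div_zero, Real.log_zero, Real.sqrt_zero, sub_zero]
    have : ((0:ℝ))^b = 0 := Real.zero_rpow (ne_of_gt hb)
    rw [this]
    have e1 : (0:ℝ)^2 * P = 0 := by ring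
    rw [e1]
    positivity
  · have hv : 0 ≤ P/Q := div_nonneg hP h0.le
    have hvQ : P/Q * Q = P := div_mul_cancel₀ P (ne_of_gt h0)
    have key := lemC b T (P/Q) hb hT0 hT hv
    have hm := mul_le_mul_of_nonneg_right key h0.le
    have hs : Real.sqrt (P/Q) * Real.sqrt Q = Real.sqrt P := by
      rw [← Real.sqrt_mul hv, hvQ]
    have hsq : (Real.sqrt (P/Q) - 1)^2 * Q = (Real.sqrt P - Real.sqrt Q)^2 := by
      have hQs : Real.sqrt Q * Real.sqrt Q = Q := Real.mul_self_sqrt h0.le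
      rw [← hs]
      nth_rewrite 2 [← hQs]
      ring
    calc (Real.log (P/Q))^2 * P = (Real.log (P/Q))^2 * (P/Q) * Q := by rw [mul_assoc, hvQ]
      _ ≤ (100 * (1 + Real.log T)^2 * (Real.sqrt (P/Q) - 1)^2
            + (Real.log T)^2 / T^b * ((P/Q)^b * (P/Q))) * Q := hm
      _ = 100 * (1 + Real.log T)^2 * ((Real.sqrt (P/Q) - 1)^2 * Q)
            + (Real.log T)^2 / T^b * ((P/Q)^b * (P/Q * Q)) := by ring
      _ = 100 * (1 + Real.log T)^2 * (Real.sqrt P - Real.sqrt Q)^2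
            + (Real.log T)^2 / T^b * ((P/Q)^b * P) := by rw [hsq, hvQ]

set_option maxHeartbeats 1000000 in
/-- For every `b > 0` there is `ε_b > 0` such that for every probability density
`p` and finite-measure density `q` with `0 < h²(p,q) < ε_b P(p/q)^b`:
`P (log(p/q))² ≤ K h²(p,q) (1 + (1/b) log₊(1/h(p,q)) + (1/b) log₊ P(p/q)^b)²`
for a universal constant `K`, where `h²(p,q) = ∫ (√p - √q)² dμ`. -/
theorem stmt19 : ∃ K : ℝ, 0 < K ∧
    ∀ b : ℝ, 0 < b → ∃ εb : ℝ, 0 < εb ∧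
    ∀ (X : Type) (_ : MeasurableSpace X) (μ : Measure X), SigmaFinite μ →
    ∀ (p q : X → ℝ), Measurable p → Measurable q →
      (∀ x, 0 ≤ p x) → (∀ x, 0 ≤ q x) →
      (∫ x, p x ∂μ = 1) → Integrable q μ →
      Integrable (fun x => (Real.sqrt (p x) - Real.sqrt (q x)) ^ 2) μ →
      Integrable (fun x => (p x / q x) ^ b * p x) μ →
      Integrable (fun x => (Real.log (p x / q x)) ^ 2 * p x) μ →
      0 < ∫ x, (Real.sqrt (p x) - Real.sqrt (q x)) ^ 2 ∂μ →
      (∫ x, (Real.sqrt (p x) - Real.sqrt (q x)) ^ 2 ∂μ) <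
        εb * ∫ x, (p x / q x) ^ b * p x ∂μ →
      (∫ x, (Real.log (p x / q x)) ^ 2 * p x ∂μ) ≤
        K * (∫ x, (Real.sqrt (p x) - Real.sqrt (q x)) ^ 2 ∂μ) *
          (1 + (1 / b) * max (Real.log
              (1 / Real.sqrt (∫ x, (Real.sqrt (p x) - Real.sqrt (q x)) ^ 2 ∂μ))) 0 +
            (1 / b) * max (Real.log (∫ x, (p x / q x) ^ b * p x ∂μ)) 0) ^ 2 := by
  refine ⟨404, by norm_num, fun b hb => ⟨Real.exp (-2), Real.exp_pos _, ?_⟩⟩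
  intro X mX μ hσ p q hpm hqm hp0 hq0 hp1 hqInt hInt1 hInt2 hInt3 hH hHM
  set H := ∫ x, (Real.sqrt (p x) - Real.sqrt (q x)) ^ 2 ∂μ with hHdef
  set M := ∫ x, (p x / q x) ^ b * p x ∂μ with hMdef
  have hexp : Real.exp 2 * Real.exp (-2) = 1 := by
    rw [← Real.exp_add]; norm_num
  have hM0 : 0 < M := by nlinarith [Real.exp_pos (2:ℝ), Real.exp_pos (-2:ℝ)]
  have hMH : Real.exp 2 < M / H := by
    rw [lt_div_iff₀ hH]
    nlinarith [Real.exp_pos (2:ℝ)]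
  have hMHpos : (0:ℝ) < M / H := by positivity
  set ℓ := (1/b) * Real.log (M/H) with hl
  set T := Real.exp ℓ with hTdef
  have hlogT : Real.log T = ℓ := Real.log_exp ℓ
  have hlMH : 2 < Real.log (M/H) := by
    have h := Real.log_lt_log (Real.exp_pos 2) hMH
    rwa [Real.log_exp] at h
  have hT2 : 2/b ≤ Real.log T := by
    rw [hlogT, hl]
    rw [div_le_iff₀ hb]
    have h1 : (0:ℝ) < 1/b := by positivity
    calc (2:ℝ) ≤ Real.log (M/H) := hlMH.le
      _ = 1/b * Real.log (M/H) * b := by field_simp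
  have hTb : T ^ b = M / H := by
    rw [hTdef, Real.rpow_def_of_pos (Real.exp_pos ℓ), Real.log_exp]
    have : ℓ * b = Real.log (M/H) := by rw [hl]; field_simp
    rw [this, Real.exp_log hMHpos]
  have hptwise : ∀ x, (Real.log (p x / q x))^2 * p x ≤
      100*(1+Real.log T)^2*(Real.sqrt (p x) - Real.sqrt (q x))^2
        + (Real.log T)^2/T^b * ((p x / q x)^b * p x) :=
    fun x => lemD b T (p x) (q x) hb (Real.exp_pos ℓ) hT2 (hp0 x) (hq0 x)
  have hgi1 : Integrable (fun x => 100*(1+Real.log T)^2*(Real.sqrt (p x) - Real.sqrt (q x))^2) μ :=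
    hInt1.const_mul _
  have hgi2 : Integrable (fun x => (Real.log T)^2/T^b * ((p x / q x)^b * p x)) μ :=
    hInt2.const_mul _
  have hmono := integral_mono hInt3 (hgi1.add hgi2) hptwise
  simp only [Pi.add_apply] at hmono
  rw [integral_add hgi1 hgi2, integral_const_mul, integral_const_mul,
      ← hHdef, ← hMdef, hlogT, hTb] at hmono
  have hc : ℓ^2/(M/H)*M = ℓ^2*H := by field_simp
  rw [hc] at hmono
  have ha : 0 ≤ (1/b) * max (Real.log (1/Real.sqrt H)) 0 :=
    mul_nonneg (by positivity) (le_max_right _ _)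
  have hcc : 0 ≤ (1/b) * max (Real.log M) 0 :=
    mul_nonneg (by positivity) (le_max_right _ _)
  have hℓ0 : 0 ≤ ℓ := le_trans (by positivity) (hlogT ▸ hT2)
  have hℓle : ℓ ≤ 2*((1/b) * max (Real.log (1/Real.sqrt H)) 0) + (1/b) * max (Real.log M) 0 := by
    rw [hl]
    have hlog_div : Real.log (M/H) = Real.log M - Real.log H :=
      Real.log_div (ne_of_gt hM0) (ne_of_gt hH)
    have hlogH : Real.log (1/Real.sqrt H) = -(Real.log H)/2 := by
      rw [one_div, Real.log_inv, Real.log_sqrt hH.le]; ring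
    have e1 : Real.log M ≤ max (Real.log M) 0 := le_max_left _ _
    have e2 : -Real.log H ≤ 2 * max (Real.log (1/Real.sqrt H)) 0 := by
      have h := le_max_left (Real.log (1/Real.sqrt H)) 0
      linarith [hlogH.le, hlogH.ge]
    rw [hlog_div]
    have hbinv : (0:ℝ) ≤ 1/b := by positivity
    have step : Real.log M - Real.log H ≤
        max (Real.log M) 0 + 2 * max (Real.log (1/Real.sqrt H)) 0 := by linarith
    calc (1/b)*(Real.log M - Real.log H)
        ≤ (1/b)*(max (Real.log M) 0 + 2 * max (Real.log (1/Real.sqrt H)) 0) :=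
          mul_le_mul_of_nonneg_left step hbinv
      _ = 2*((1/b) * max (Real.log (1/Real.sqrt H)) 0) + (1/b) * max (Real.log M) 0 := by ring
  set A := (1/b) * max (Real.log (1/Real.sqrt H)) 0 with hA
  set C := (1/b) * max (Real.log M) 0 with hC
  have hL : 1 + ℓ ≤ 2*(1+A+C) := by linarith
  have s1 : (1+ℓ)^2 ≤ (2*(1+A+C))^2 := by nlinarith
  have s3 : ℓ^2 ≤ (1+ℓ)^2 := by nlinarith
  have s1m := mul_le_mul_of_nonneg_right s1 hH.le
  have s3m := mul_le_mul_of_nonneg_right s3 hH.le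
  calc ∫ x, (Real.log (p x / q x))^2 * p x ∂μ ≤ 100*(1+ℓ)^2*H + ℓ^2*H := hmono
    _ ≤ 404 * H * (1+A+C)^2 := by nlinarith [s1m, s3m]
end
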